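/- The triple of functions χ₁(t) = −(κ + ω·tanh(tω/2))/(4√2), χ₂(t) = (κ − 3ω·tanh(tω/2))/(4√6), Φ₃(t) = ω/√((1 + e^{−tω})(1 + e^{tω})) (with Φ₁ ≡ Φ₂ ≡ 0) solves the A₂ geodesic tangent-vector system: χ₁' + Φ₃²/(2√2) = 0, χ₂' + (√3/(2√2))·Φ₃² = 0, and Φ₃' − (1/√2)·Φ₃·χ₁ − √(3/2)·Φ₃·χ₂ = 0, for all t ∈ ℝ and all real parameters κ, ω. -/

import Mathlib

/-! Since `(1 + e^{-x})(1 + e^x) = (2 cosh (x/2))²`, the field is `Φ₃ = (ω/2) sech (tω/2)`.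
With `tanh' = sech²` and `sech' = -tanh · sech`, each equation becomes an identity between
rational expressions in `tanh`, `sech`, `√2` and `√3` (using `√6 = √2 √3`). -/

open Real

theorem Real.hasDerivAt_tanh (x : ℝ) : HasDerivAt tanh (1 / cosh x ^ 2) x := by
  have h := (hasDerivAt_sinh x).div (hasDerivAt_cosh x) (cosh_pos x).ne'
  rw [← sq, ← sq, cosh_sq_sub_sinh_sq x] at h
  exact h.congr_of_eventuallyEq (.of_forall fun y => tanh_eq_sinh_div_cosh y)

theorem HasDerivAt.tanh {f : ℝ → ℝ} {f' x : ℝ} (hf : HasDerivAt f f' x) :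
    HasDerivAt (fun y => Real.tanh (f y)) (f' / Real.cosh (f x) ^ 2) x :=
  ((hasDerivAt_tanh (f x)).comp x hf).congr_deriv (by ring)

theorem HasDerivAt.inv_cosh {f : ℝ → ℝ} {f' x : ℝ} (hf : HasDerivAt f f' x) :
    HasDerivAt (fun y => (Real.cosh (f y))⁻¹)
      (-(f' * Real.tanh (f x) / Real.cosh (f x))) x := by
  refine (hf.cosh.inv (cosh_pos (f x)).ne').congr_deriv ?_
  rw [tanh_eq_sinh_div_cosh]
  field_simp

theorem Real.sqrt_one_add_exp_neg_mul_one_add_exp (x : ℝ) :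
    √((1 + exp (-x)) * (1 + exp x)) = 2 * cosh (x / 2) := by
  have h : (1 + exp (-x)) * (1 + exp x) = (2 * cosh (x / 2)) ^ 2 := by
    have hx : exp x = exp (x / 2) ^ 2 := by rw [← exp_nat_mul]; ring_nf
    have hnx : exp (-x) = exp (-(x / 2)) ^ 2 := by rw [← exp_nat_mul]; ring_nf
    have hinv : exp (x / 2) * exp (-(x / 2)) = 1 := by rw [← exp_add, add_neg_cancel, exp_zero]
    rw [cosh_eq, hx, hnx]
    linear_combination (exp (x / 2) * exp (-(x / 2)) - 1) * hinv
  rw [h, sqrt_sq (by positivity)]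

/-- The one-root solution of the `A₂` geodesic tangent-vector system:
`χ₁ = -(κ + ω tanh(tω/2))/(4√2)`, `χ₂ = (κ - 3ω tanh(tω/2))/(4√6)`,
`Φ₃ = ω/√((1+e^{-tω})(1+e^{tω}))` (with `Φ₁ ≡ Φ₂ ≡ 0`) satisfies
`χ₁' + Φ₃²/(2√2) = 0`, `χ₂' + (√3/(2√2)) Φ₃² = 0`,
`Φ₃' - (1/√2) Φ₃ χ₁ - √(3/2) Φ₃ χ₂ = 0`. -/
theorem A2_one_root_solution
    (κ ω : ℝ) (χ₁ χ₂ Φ₃ : ℝ → ℝ)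
    (hχ₁ : χ₁ = fun t => -(κ + ω * Real.tanh (t * ω / 2)) / (4 * Real.sqrt 2))
    (hχ₂ : χ₂ = fun t => (κ - 3 * ω * Real.tanh (t * ω / 2)) / (4 * Real.sqrt 6))
    (hΦ₃ : Φ₃ = fun t =>
      ω / Real.sqrt ((1 + Real.exp (-(t * ω))) * (1 + Real.exp (t * ω)))) :
    (∀ t, deriv χ₁ t + Φ₃ t ^ 2 / (2 * Real.sqrt 2) = 0) ∧
    (∀ t, deriv χ₂ t + Real.sqrt 3 / (2 * Real.sqrt 2) * Φ₃ t ^ 2 = 0) ∧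
    (∀ t, deriv Φ₃ t - 1 / Real.sqrt 2 * Φ₃ t * χ₁ t
      - Real.sqrt (3 / 2) * Φ₃ t * χ₂ t = 0) := by
  obtain rfl : Φ₃ = fun t => ω / 2 * (cosh (t * ω / 2))⁻¹ := by
    rw [hΦ₃]; funext t; rw [sqrt_one_add_exp_neg_mul_one_add_exp]; ring
  subst hχ₁ hχ₂
  have h6 : √6 = √2 * √3 := by rw [← sqrt_mul zero_le_two]; norm_num
  have h32 : √(3 / 2) = √3 / √2 := sqrt_div' _ zero_le_two
  have h2 : √2 ^ 2 = 2 := sq_sqrt zero_le_two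
  have h3 : √3 ^ 2 = 3 := sq_sqrt zero_le_three
  have hu (t : ℝ) : HasDerivAt (fun s => s * ω / 2) (ω / 2) t := by
    simpa using ((hasDerivAt_id t).mul_const ω).div_const 2
  refine ⟨fun t => ?_, fun t => ?_, fun t => ?_⟩
  · have hχ₁' : HasDerivAt (fun t => -(κ + ω * tanh (t * ω / 2)) / (4 * √2)) _ t :=
      (((hu t).tanh.const_mul ω).const_add κ).neg.div_const _
    rw [hχ₁'.deriv]
    field_simp
    ring
  · rw [(((hu t).tanh.const_mul (3 * ω)).const_sub κ |>.div_const _).deriv, h6]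
    field_simp
    rw [h3]
    ring
  · rw [((hu t).inv_cosh.const_mul (ω / 2)).deriv, h32, h6]
    simp only [tanh_eq_sinh_div_cosh]
    field_simp
    rw [h2]
    ring
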